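/- Let V be a real vector space and I a set. Then every I-indexed family of norms on V is dominated if and only if at least one of the following holds: (i) V is finite-dimensional; (ii) I is finite; (iii) V has countable dimension and the cardinality of I is strictly less than the bounding number 𝔟; (iv) I is countable and the dimension of V is strictly less than 𝔟. -/

import Mathlib

universe u v

/-- `N` is a norm on the real vector space `V`. -/
def IsNorm {V : Type*} [AddCommGroup V] [Module ℝ V] (N : V → ℝ) : Prop :=
  (∀ x, 0 ≤ N x) ∧ (∀ x, N x = 0 ↔ x = 0) ∧
    (∀ (a : ℝ) (x : V), N (a • x) = |a| * N x) ∧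
    ∀ x y, N (x + y) ≤ N x + N y

/-- The bounding number `𝔟`: the least cardinality of a subset of `ℕ → ℕ` that is
unbounded for eventual domination. -/
noncomputable def boundingNumber : Cardinal.{0} :=
  sInf {c : Cardinal.{0} | ∃ X : Set (ℕ → ℕ), Cardinal.mk X = c ∧
    ¬ ∃ g : ℕ → ℕ, ∀ f ∈ X, ∃ n : ℕ, ∀ k ≥ n, f k ≤ g k}

/-!
Fix a basis `(e_j)` of `V`. A family of norms `N_i` is dominated iff the positive matrix
`N_i(e_j)` lies below a rank-one matrix `c_i w_j`: evaluate a dominating norm on the basis, and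
conversely take the weighted `ℓ¹` norm `∑ w_j |x_j|`. Every positive matrix arises this way from
the weighted `ℓ¹` norms of its rows, so the question becomes combinatorial and symmetric in the
two index sets.

If the columns are countable and there are fewer than `𝔟` rows, one function eventually dominates
every row, and the finitely many exceptional entries of a row are absorbed into `c_i`. If the
columns are infinite and there are at least `𝔟` rows, an unbounded family of size `𝔟` written into
countably many columns defeats every `w`. If both index sets are uncountable, restrict to
`ω₁ × ω₁` and let column `b` enumerate the countably many rows `a < b` injectively (Sierpiński):
some `m` bounds `c` and `w` on an uncountable set, and a column of that set lying above infinitely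
many of its rows has unbounded entries there.
-/

open Cardinal Filter Set

def RankOneDominated (A B : Type*) : Prop :=
  ∀ M : A → B → ℝ, (∀ a b, 0 < M a b) →
    ∃ c : A → ℝ, ∃ w : B → ℝ, (∀ a, 0 < c a) ∧ (∀ b, 0 < w b) ∧ ∀ a b, M a b ≤ c a * w b

section WeightedNorm

variable {V : Type*} [AddCommGroup V] [Module ℝ V]

theorem IsNorm.pos {N : V → ℝ} (hN : IsNorm N) {x : V} (hx : x ≠ 0) : 0 < N x :=
  (hN.1 x).lt_of_ne fun h => hx ((hN.2.1 x).1 h.symm)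

variable {ι : Type*} (b : Module.Basis ι ℝ V)

noncomputable def weightedNorm (w : ι → ℝ) (x : V) : ℝ :=
  (b.repr x).sum fun i r => w i * |r|

theorem weightedNorm_eq_sum (w : ι → ℝ) (x : V) {s : Finset ι} (hs : (b.repr x).support ⊆ s) :
    weightedNorm b w x = ∑ i ∈ s, w i * |b.repr x i| :=
  Finsupp.sum_of_support_subset _ hs _ fun i _ => by simp

theorem weightedNorm_basis (w : ι → ℝ) (i : ι) : weightedNorm b w (b i) = w i := by
  simp [weightedNorm, Finsupp.sum_single_index]

theorem isNorm_weightedNorm {w : ι → ℝ} (hw : ∀ i, 0 < w i) : IsNorm (weightedNorm b w) := by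
  classical
  refine ⟨fun x => Finsupp.sum_nonneg fun i _ => mul_nonneg (hw i).le (abs_nonneg _),
    fun x => ⟨fun h => ?_, ?_⟩, fun a x => ?_, fun x y => ?_⟩
  · by_contra hx
    refine h.not_gt (Finsupp.sum_pos (fun i hi => ?_) (by simpa using hx))
    exact mul_pos (hw i) (abs_pos.2 (Finsupp.mem_support_iff.1 hi))
  · rintro rfl
    simp [weightedNorm]
  · rw [weightedNorm_eq_sum b w (a • x) (by simpa using Finsupp.support_smul),
      weightedNorm_eq_sum b w x subset_rfl, Finset.mul_sum]
    refine Finset.sum_congr rfl fun i _ => ?_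
    simp only [map_smul, Finsupp.smul_apply, smul_eq_mul, abs_mul]
    ring
  · rw [weightedNorm_eq_sum b w (x + y) (by simpa using Finsupp.support_add),
      weightedNorm_eq_sum b w x Finset.subset_union_left,
      weightedNorm_eq_sum b w y Finset.subset_union_right, ← Finset.sum_add_distrib]
    refine Finset.sum_le_sum fun i _ => ?_
    rw [map_add, Finsupp.add_apply, ← mul_add]
    exact mul_le_mul_of_nonneg_left (abs_add_le _ _) (hw i).le

theorem IsNorm.le_mul_weightedNorm {N : V → ℝ} (hN : IsNorm N) {w : ι → ℝ} {c : ℝ}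
    (h : ∀ i, N (b i) ≤ c * w i) (x : V) : N x ≤ c * weightedNorm b w x := by
  conv_lhs => rw [← b.linearCombination_repr x, Finsupp.linearCombination_apply, Finsupp.sum]
  calc N (∑ i ∈ (b.repr x).support, b.repr x i • b i)
      ≤ ∑ i ∈ (b.repr x).support, N (b.repr x i • b i) :=
        Finset.le_sum_of_subadditive N ((hN.2.1 0).2 rfl).le hN.2.2.2 _ _
    _ ≤ ∑ i ∈ (b.repr x).support, |b.repr x i| * (c * w i) := by
        refine Finset.sum_le_sum fun i _ => ?_
        rw [hN.2.2.1]
        exact mul_le_mul_of_nonneg_left (h i) (abs_nonneg _)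
    _ = c * weightedNorm b w x := by
        rw [weightedNorm_eq_sum b w x subset_rfl, Finset.mul_sum]
        exact Finset.sum_congr rfl fun i _ => by ring

end WeightedNorm

theorem forall_isNorm_dominated_iff {V ι : Type*} [AddCommGroup V] [Module ℝ V]
    (b : Module.Basis ι ℝ V) (I : Type*) :
    (∀ N : I → V → ℝ, (∀ i, IsNorm (N i)) →
        ∃ N' : V → ℝ, IsNorm N' ∧ ∀ i, ∃ c : ℝ, 0 < c ∧ ∀ x, N i x ≤ c * N' x) ↔
      RankOneDominated I ι := by
  constructor
  · intro h M hM
    obtain ⟨N', hN', hdom⟩ :=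
      h (fun k => weightedNorm b (M k)) fun k => isNorm_weightedNorm b (hM k)
    choose c hc hle using hdom
    refine ⟨c, fun i => N' (b i), hc, fun i => hN'.pos (b.ne_zero i), fun k i => ?_⟩
    simpa only [weightedNorm_basis] using hle k (b i)
  · intro h N hN
    obtain ⟨c, w, hc, hw, hle⟩ := h (fun k i => N k (b i)) fun k i => (hN k).pos (b.ne_zero i)
    exact ⟨weightedNorm b w, isNorm_weightedNorm b hw,
      fun k => ⟨c k, hc k, (hN k).le_mul_weightedNorm b (hle k)⟩⟩

section RankOneDomination

variable {A B : Type*}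

theorem RankOneDominated.symm (h : RankOneDominated A B) : RankOneDominated B A := by
  intro M hM
  obtain ⟨c, w, hc, hw, hle⟩ := h (fun a b => M b a) fun a b => hM b a
  exact ⟨w, c, hw, hc, fun b a => (hle a b).trans_eq (mul_comm _ _)⟩

theorem Function.extend_pos {α β : Type*} (f : α → β) {φ : α → ℝ} {ψ : β → ℝ}
    (hφ : ∀ a, 0 < φ a) (hψ : ∀ b, 0 < ψ b) (b : β) : 0 < Function.extend f φ ψ b := by
  classical
  rw [Function.extend_def]
  split_ifs
  exacts [hφ _, hψ _]

theorem RankOneDominated.of_embedding {A' B' : Type*} (h : RankOneDominated A B)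
    (f : A' ↪ A) (g : B' ↪ B) : RankOneDominated A' B' := by
  intro M hM
  obtain ⟨c, w, hc, hw, hle⟩ :=
    h (fun a b => Function.extend f (fun a' => Function.extend g (M a') 1 b) 1 a)
      fun a b => Function.extend_pos f
        (fun a' => Function.extend_pos g (hM a') (fun _ => one_pos) b) (fun _ => one_pos) a
  refine ⟨c ∘ f, w ∘ g, fun a => hc _, fun b => hw _, fun a b => ?_⟩
  simpa only [Function.comp_apply, f.injective.extend_apply, g.injective.extend_apply]
    using hle (f a) (g b)

theorem exists_rankOne_le_of_eventually_le (M : A → B → ℝ) (w : B → ℝ)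
    (h : ∀ a, ∀ᶠ b in cofinite, M a b ≤ w b) :
    ∃ c : A → ℝ, ∃ w' : B → ℝ, (∀ a, 0 < c a) ∧ (∀ b, 0 < w' b) ∧ ∀ a b, M a b ≤ c a * w' b := by
  have hfin a := eventually_cofinite.1 (h a)
  refine ⟨fun a => 1 + ∑ b ∈ (hfin a).toFinset, |M a b|, fun b => max (w b) 1,
    fun a => by positivity, fun b => by positivity, fun a b => ?_⟩
  have hc : 1 ≤ 1 + ∑ b ∈ (hfin a).toFinset, |M a b| :=
    le_add_of_nonneg_right (Finset.sum_nonneg fun _ _ => abs_nonneg _)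
  by_cases hb : M a b ≤ w b
  · exact (hb.trans (le_max_left _ _)).trans (le_mul_of_one_le_left (by positivity) hc)
  · calc M a b ≤ |M a b| := le_abs_self _
      _ ≤ ∑ b ∈ (hfin a).toFinset, |M a b| :=
        Finset.single_le_sum (f := fun b => |M a b|) (fun _ _ => abs_nonneg _) (by simpa using hb)
      _ ≤ 1 + ∑ b ∈ (hfin a).toFinset, |M a b| := le_add_of_nonneg_left zero_le_one
      _ ≤ _ := le_mul_of_one_le_right (by positivity) (le_max_right _ _)

theorem rankOneDominated_of_finite [Finite B] : RankOneDominated A B :=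
  fun M _ => exists_rankOne_le_of_eventually_le M 0 fun _ => by simp [cofinite_eq_bot]

theorem not_rankOneDominated_nat {F : A → ℕ → ℕ}
    (hF : ∀ g : ℕ → ℕ, ∃ a, ∃ᶠ n in atTop, g n < F a n) : ¬ RankOneDominated A ℕ := by
  intro h
  obtain ⟨c, w, -, hw, hle⟩ := h (fun a n => F a n + 1) fun _ _ => by positivity
  obtain ⟨a, ha⟩ := hF fun n => ⌈n * w n⌉₊
  obtain ⟨n, hn, hcn⟩ := (ha.and_eventually (eventually_ge_atTop ⌈c a⌉₊)).exists
  have hcn : c a ≤ n := (Nat.le_ceil _).trans (Nat.cast_le.2 hcn)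
  have := (hle a n).trans (mul_le_mul_of_nonneg_right hcn (hw n).le)
  have := (Nat.le_ceil ((n : ℝ) * w n)).trans_lt (Nat.cast_lt.2 hn)
  linarith

theorem exists_nat_not_countable_setOf_le (hA : ¬ Countable A) (q : A → ℝ) :
    ∃ m : ℕ, ¬ {a | q a ≤ m}.Countable := by
  by_contra! h
  refine hA (countable_univ_iff.1 ?_)
  rw [← iUnion_eq_univ_iff.2 fun a => exists_nat_ge (q a)]
  exact countable_iUnion h

theorem not_rankOneDominated_self_of_countable_Iio {W : Type*} [LinearOrder W]
    (hW : ¬ Countable W) (hIio : ∀ a : W, (Iio a).Countable) : ¬ RankOneDominated W W := by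
  choose e he using fun b => countable_iff_exists_injOn.1 (hIio b)
  intro h
  obtain ⟨c, w, -, hw, hle⟩ := h (fun a b => e b a + 1) fun _ _ => by positivity
  obtain ⟨m, hm⟩ := exists_nat_not_countable_setOf_le hW fun a => max (c a) (w a)
  set T := {a | max (c a) (w a) ≤ m}
  have : Infinite T := infinite_coe_iff.2 fun hT => hm hT.countable
  set S := range fun n => (Infinite.natEmbedding T n : W)
  have hS : S.Infinite :=
    infinite_range_of_injective (Subtype.val_injective.comp (Infinite.natEmbedding T).injective)
  have hST : S ⊆ T := range_subset_iff.2 fun n => (Infinite.natEmbedding T n).2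
  obtain ⟨v, hvT, hv⟩ := not_subset.1 fun hsub : T ⊆ ⋃ a ∈ S, Iic a =>
    hm <| ((countable_range _).biUnion fun a _ => Iio_insert (a := a) ▸ (hIio a).insert a).mono hsub
  have hSv : S ⊆ Iio v := fun a ha => lt_of_not_ge fun hva => hv (mem_biUnion ha hva)
  obtain ⟨_, ⟨a, ha, rfl⟩, hk⟩ := (hS.image ((he v).mono hSv)).exists_gt (m * m)
  have hca : c a ≤ m := (le_max_left _ _).trans (hST ha)
  have hwv : w v ≤ m := (le_max_right _ _).trans hvT
  have := (hle a v).trans (mul_le_mul hca hwv (hw v).le (Nat.cast_nonneg m))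
  have : ((m * m : ℕ) : ℝ) < e v a := Nat.cast_lt.2 hk
  push_cast at *
  linarith

theorem nonempty_embedding_of_not_countable (hA : ¬ Countable A) :
    Nonempty ((aleph.{0} 1).ord.ToType ↪ A) := by
  refine lift_mk_le'.1 ?_
  rw [mk_toType, card_ord, lift_aleph, Ordinal.lift_one, aleph_one_le_iff, aleph0_lt_lift,
    ← not_le, mk_le_aleph0_iff]
  exact hA

theorem not_rankOneDominated_of_not_countable (hA : ¬ Countable A) (hB : ¬ Countable B) :
    ¬ RankOneDominated A B := by
  have hW : ¬ Countable (aleph.{0} 1).ord.ToType := by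
    rw [← mk_le_aleph0_iff, mk_toType, card_ord, not_le]
    exact aleph0_lt_aleph_one
  obtain ⟨f⟩ := nonempty_embedding_of_not_countable hA
  obtain ⟨g⟩ := nonempty_embedding_of_not_countable hB
  exact fun h => not_rankOneDominated_self_of_countable_Iio hW
    (fun a => le_aleph0_iff_set_countable.1 <| lt_aleph_one_iff.1 <|
      (mk_Iio_lt a (by simp)).trans_eq (mk_ord_toType _)) (h.of_embedding f g)

end RankOneDomination

section BoundingNumber

variable {A : Type u} {B : Type*}

theorem eventually_le_of_mk_lt_boundingNumber (hA : #A < lift.{u} boundingNumber)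
    (F : A → ℕ → ℕ) : ∃ g : ℕ → ℕ, ∀ a, ∀ᶠ n in atTop, F a n ≤ g n := by
  by_contra hF
  have hle : boundingNumber ≤ #(range F) := csInf_le' ⟨range F, rfl, fun ⟨g, hg⟩ =>
    hF ⟨g, fun a => eventually_atTop.2 (hg _ (mem_range_self a))⟩⟩
  have := (lift_monotone hle).trans (lift_uzero #A ▸ mk_range_le_lift (f := F))
  exact this.not_gt hA

theorem exists_unbounded_of_boundingNumber_le (hA : lift.{u} boundingNumber ≤ #A) :
    ∃ F : A → ℕ → ℕ, ∀ g : ℕ → ℕ, ∃ a, ∃ᶠ n in atTop, g n < F a n := by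
  obtain ⟨X, hX, hunb⟩ : boundingNumber ∈ {c : Cardinal.{0} | ∃ X : Set (ℕ → ℕ),
      #X = c ∧ ¬ ∃ g : ℕ → ℕ, ∀ f ∈ X, ∃ n : ℕ, ∀ k ≥ n, f k ≤ g k} :=
    csInf_mem ⟨_, univ, rfl, fun ⟨g, hg⟩ => by
      obtain ⟨n, hn⟩ := hg (g · + 1) (mem_univ _)
      exact (hn n le_rfl).not_gt (Nat.lt_succ_self _)⟩
  obtain ⟨j⟩ := lift_mk_le'.1 (by rwa [hX, lift_uzero] : lift.{u} #X ≤ lift.{0} #A)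
  refine ⟨Function.extend j Subtype.val 0, fun g => ?_⟩
  push Not at hunb
  obtain ⟨f, hf, hfg⟩ := hunb g
  exact ⟨j ⟨f, hf⟩, frequently_atTop.2 fun n => by rw [j.injective.extend_apply]; exact hfg n⟩

theorem exists_cofinite_le_of_mk_lt_boundingNumber [Countable B]
    (hA : #A < lift.{u} boundingNumber) (M : A → B → ℝ) :
    ∃ w : B → ℝ, ∀ a, ∀ᶠ b in cofinite, M a b ≤ w b := by
  obtain ⟨ι, hι⟩ := Countable.exists_injective_nat B
  obtain ⟨g, hg⟩ := eventually_le_of_mk_lt_boundingNumber hA fun a =>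
    Function.extend ι (fun b => ⌈M a b⌉₊) 0
  refine ⟨fun b => g (ι b), fun a => ?_⟩
  filter_upwards [(Nat.cofinite_eq_atTop ▸ hι.tendsto_cofinite).eventually (hg a)] with b hb
  rw [hι.extend_apply] at hb
  exact (Nat.le_ceil _).trans (Nat.cast_le.2 hb)

theorem rankOneDominated_of_mk_lt_boundingNumber [Countable B]
    (hA : #A < lift.{u} boundingNumber) : RankOneDominated A B := fun M _ =>
  let ⟨w, hw⟩ := exists_cofinite_le_of_mk_lt_boundingNumber hA M
  exists_rankOne_le_of_eventually_le M w hw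

theorem not_rankOneDominated_of_boundingNumber_le [Infinite B]
    (hA : lift.{u} boundingNumber ≤ #A) : ¬ RankOneDominated A B := fun h =>
  let ⟨_, hF⟩ := exists_unbounded_of_boundingNumber_le hA
  not_rankOneDominated_nat hF (h.of_embedding (Function.Embedding.refl A) (Infinite.natEmbedding B))

end BoundingNumber

theorem rankOneDominated_iff {A : Type u} {B : Type v} :
    RankOneDominated A B ↔ Finite B ∨ Finite A ∨
      (Countable B ∧ #A < lift.{u} boundingNumber) ∨
      (Countable A ∧ #B < lift.{v} boundingNumber) := by
  refine ⟨fun h => ?_, ?_⟩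
  · by_contra! hcon
    obtain ⟨hB, hA, hBA, hAB⟩ := hcon
    by_cases hBc : Countable B
    · exact not_rankOneDominated_of_boundingNumber_le (hBA hBc) h
    by_cases hAc : Countable A
    · exact not_rankOneDominated_of_boundingNumber_le (hAB hAc) h.symm
    exact not_rankOneDominated_of_not_countable hAc hBc h
  · rintro (hB | hA | ⟨hB, hA⟩ | ⟨hA, hB⟩)
    · exact rankOneDominated_of_finite
    · exact rankOneDominated_of_finite.symm
    · exact rankOneDominated_of_mk_lt_boundingNumber hA
    · exact (rankOneDominated_of_mk_lt_boundingNumber hB).symm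

/-- Every `I`-indexed family of norms on `V` is dominated iff `V` is
finite-dimensional, or `I` is finite, or `V` has countable dimension and `#I < 𝔟`,
or `I` is countable and `dim V < 𝔟`. -/
theorem stmt6 {V : Type u} [AddCommGroup V] [Module ℝ V] (I : Type v) :
    (∀ N : I → V → ℝ, (∀ i, IsNorm (N i)) →
        ∃ N' : V → ℝ, IsNorm N' ∧ ∀ i, ∃ c : ℝ, 0 < c ∧ ∀ x, N i x ≤ c * N' x) ↔
      (FiniteDimensional ℝ V ∨ Finite I ∨
        (Module.rank ℝ V ≤ Cardinal.aleph0 ∧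
          Cardinal.mk I < Cardinal.lift.{v} boundingNumber) ∨
        (Countable I ∧ Module.rank ℝ V < Cardinal.lift.{u} boundingNumber)) := by
  let b := Module.Basis.ofVectorSpace ℝ V
  have hfin : Finite (Module.Basis.ofVectorSpaceIndex ℝ V) ↔ FiniteDimensional ℝ V :=
    ⟨fun _ => Module.Finite.of_basis b, fun _ => Module.Finite.finite_basis b⟩
  rw [forall_isNorm_dominated_iff b, rankOneDominated_iff, hfin, ← mk_le_aleph0_iff,
    b.mk_eq_rank'']
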